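/- Let X be a positive integer admitting a representation as a product of degree d ≥ 1 with base b and spread s. Then, as real numbers, (b + s)^d ≤ e^{s(d−1)/b} · b^{d−1} · (b + s) ≤ e^{s(d−1)/b} · X. -/

import Mathlib

/-- `IsProductRep X d b s` : `X` admits a representation as a product of `d` positive
integers with base (minimum) `b` and spread (max − min) `s`. -/
def IsProductRep (X d b s : ℕ) : Prop :=
  ∃ f : Fin d → ℕ, (∀ i, 0 < f i) ∧ (∏ i, f i) = X ∧
    (∀ i, b ≤ f i ∧ f i ≤ b + s) ∧ (∃ i, f i = b) ∧ (∃ i, f i = b + s)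

/-! Since `1 + x ≤ eˣ`, we have `b + s ≤ b · e^{s/b}`, which bounds `(b + s)^(d-1)`. For the
second inequality, one factor of `X` equals `b + s` and the other `d - 1` are at least `b`. -/

theorem add_pow_le_exp_mul_pow {b s : ℝ} (hb : 0 < b) (hbs : 0 ≤ b + s) (n : ℕ) :
    (b + s) ^ n ≤ Real.exp (s * n / b) * b ^ n := by
  have hbase : b + s ≤ Real.exp (s / b) * b := by
    calc b + s = (s / b + 1) * b := by field_simp; ring
      _ ≤ Real.exp (s / b) * b := by gcongr; exact Real.add_one_le_exp _
  calc (b + s) ^ n ≤ (Real.exp (s / b) * b) ^ n := by gcongr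
    _ = Real.exp (s * n / b) * b ^ n := by
      rw [mul_pow, ← Real.exp_nat_mul, mul_div_assoc', mul_comm (n : ℝ) s]

theorem Finset.pow_card_sub_one_mul_le_prod {ι M : Type*} [Fintype ι] [CommMonoid M]
    [PartialOrder M] [IsOrderedMonoid M] {f : ι → M} {b : M} (hb : ∀ i, b ≤ f i) (j : ι) :
    b ^ (Fintype.card ι - 1) * f j ≤ ∏ i, f i := by
  classical
  rw [← Finset.mul_prod_erase _ f (Finset.mem_univ j), mul_comm, ← Finset.card_univ,
    ← Finset.card_erase_of_mem (Finset.mem_univ j)]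
  gcongr
  exact Finset.pow_card_le_prod _ _ _ fun i _ ↦ hb i

namespace IsProductRep

variable {X d b s : ℕ}

theorem base_pos (h : IsProductRep X d b s) : 0 < b := by
  obtain ⟨f, hpos, -, -, ⟨i, rfl⟩, -⟩ := h
  exact hpos i

theorem base_pow_mul_le (h : IsProductRep X d b s) : b ^ (d - 1) * (b + s) ≤ X := by
  obtain ⟨f, -, rfl, hbound, -, ⟨j, hj⟩⟩ := h
  simpa [hj] using Finset.pow_card_sub_one_mul_le_prod (fun i ↦ (hbound i).1) j

end IsProductRep

theorem stmt_5_general (X d b s : ℕ) (hd : 1 ≤ d)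
    (hrep : IsProductRep X d b s) :
    ((b : ℝ) + s) ^ d ≤
        Real.exp ((s : ℝ) * ((d : ℝ) - 1) / b) * (b : ℝ) ^ (d - 1) * ((b : ℝ) + s) ∧
      Real.exp ((s : ℝ) * ((d : ℝ) - 1) / b) * (b : ℝ) ^ (d - 1) * ((b : ℝ) + s) ≤
        Real.exp ((s : ℝ) * ((d : ℝ) - 1) / b) * (X : ℝ) := by
  have hb : (0 : ℝ) < b := by exact_mod_cast hrep.base_pos
  have hX : ((b : ℝ) ^ (d - 1) * (b + s)) ≤ X := by exact_mod_cast hrep.base_pow_mul_le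
  refine ⟨?_, by rw [mul_assoc]; gcongr⟩
  have h := add_pow_le_exp_mul_pow (s := s) hb (by positivity) (d - 1)
  rw [Nat.cast_sub hd, Nat.cast_one] at h
  calc ((b : ℝ) + s) ^ d = ((b : ℝ) + s) ^ (d - 1) * (b + s) := by
        rw [← pow_succ, Nat.sub_add_cancel hd]
    _ ≤ _ := by gcongr

theorem stmt_5 (X d b s : ℕ) (hX : 0 < X) (hd : 1 ≤ d)
    (hrep : IsProductRep X d b s) :
    ((b : ℝ) + s) ^ d ≤
        Real.exp ((s : ℝ) * ((d : ℝ) - 1) / b) * (b : ℝ) ^ (d - 1) * ((b : ℝ) + s) ∧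
      Real.exp ((s : ℝ) * ((d : ℝ) - 1) / b) * (b : ℝ) ^ (d - 1) * ((b : ℝ) + s) ≤
        Real.exp ((s : ℝ) * ((d : ℝ) - 1) / b) * (X : ℝ) :=
  stmt_5_general X d b s hd hrep
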